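/- Let λ ∈ 𝒫^l_n, c ≥ 0, 1 ≤ m ≤ l and n_L = |λ_L(c,m)|. If t ∈ Std(λ) and the entries 1,…,n_L all appear in t in column c of component m or further to the left, then t = t_L # t_R for some t_L ∈ Std(λ_L(c,m)) and t_R ∈ Std(λ_R(c,m)). -/

import Mathlib

namespace FS

open scoped Classical

/-- A node `(r, c, m)`: row `r`, column `c`, component `m` (all 1-based). -/
abbrev Node := ℕ × ℕ × ℕ

/-- Membership of a node in the Young diagram of the multipartition `p`,
where `p m r` is the `r`-th part of the `m`-th component. -/
def InDiag (p : ℕ → ℕ → ℕ) (A : Node) : Prop :=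
  1 ≤ A.2.1 ∧ A.2.1 ≤ p A.2.2 A.1

/-- `p` is an `l`-multipartition of `n` (components indexed `1,…,l`, rows indexed `1,…`). -/
def IsMP (l n : ℕ) (p : ℕ → ℕ → ℕ) : Prop :=
  (∀ m r, (m = 0 ∨ l < m ∨ r = 0 ∨ n < r) → p m r = 0) ∧
  (∀ m r, 1 ≤ r → p m (r + 1) ≤ p m r) ∧
  (∑ m ∈ Finset.Icc 1 l, ∑ r ∈ Finset.Icc 1 n, p m r) = n

/-- Total size of an `l`-multicomposition (rows bounded by `n`). -/
def mpSize (l n : ℕ) (p : ℕ → ℕ → ℕ) : ℕ :=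
  ∑ m ∈ Finset.Icc 1 l, ∑ r ∈ Finset.Icc 1 n, p m r

/-- Size of the `m`-th component. -/
def compSize (n : ℕ) (p : ℕ → ℕ → ℕ) (m : ℕ) : ℕ :=
  ∑ r ∈ Finset.Icc 1 n, p m r

/-- Length of column `c` of component `m`, i.e. `(p^(m))'_c`. -/
def colLen (n : ℕ) (p : ℕ → ℕ → ℕ) (m c : ℕ) : ℕ :=
  ((Finset.Icc 1 n).filter fun r => c ≤ p m r).card

/-- Dominance order on `l`-multicompositions: `Dom l N p q` means `p ⊵ q`. -/
def Dom (l N : ℕ) (p q : ℕ → ℕ → ℕ) : Prop :=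
  ∀ m r, 1 ≤ m → m ≤ l →
    (∑ m' ∈ Finset.Icc 1 (m - 1), compSize N q m') + ∑ r' ∈ Finset.Icc 1 r, q m r' ≤
      (∑ m' ∈ Finset.Icc 1 (m - 1), compSize N p m') + ∑ r' ∈ Finset.Icc 1 r, p m r'

/-- `t` is a `p`-tableau: a bijection from the diagram of `p` onto `{1,…,n}`. -/
def IsTab (n : ℕ) (p : ℕ → ℕ → ℕ) (t : Node → ℕ) : Prop :=
  (∀ A, InDiag p A → 1 ≤ t A ∧ t A ≤ n) ∧
  (∀ A B, InDiag p A → InDiag p B → t A = t B → A = B) ∧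
  (∀ i, 1 ≤ i → i ≤ n → ∃ A, InDiag p A ∧ t A = i)

/-- Entries increase from left to right along each row. -/
def RowStrict (p : ℕ → ℕ → ℕ) (t : Node → ℕ) : Prop :=
  ∀ r c m, InDiag p (r, c, m) → InDiag p (r, c + 1, m) → t (r, c, m) < t (r, c + 1, m)

/-- Entries increase down each column. -/
def ColStrict (p : ℕ → ℕ → ℕ) (t : Node → ℕ) : Prop :=
  ∀ r c m, InDiag p (r, c, m) → InDiag p (r + 1, c, m) → t (r, c, m) < t (r + 1, c, m)

/-- A standard tableau is both row-strict and column-strict. -/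
def IsStd (p : ℕ → ℕ → ℕ) (t : Node → ℕ) : Prop := RowStrict p t ∧ ColStrict p t

/-- The tableau `t_λ`, obtained by writing `1,…,n` in order down successive columns
from left to right (components from `l` down to `1`). -/
def colTab (l n : ℕ) (p : ℕ → ℕ → ℕ) : Node → ℕ := fun A =>
  (∑ m' ∈ Finset.Icc (A.2.2 + 1) l, compSize n p m') +
    (∑ c' ∈ Finset.Icc 1 (A.2.1 - 1), colLen n p A.2.2 c') + A.1

/-- The tableau `t^λ`, obtained by writing `1,…,n` in order along successive rows
from top to bottom (components from `1` up to `l`). -/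
def rowTab (n : ℕ) (p : ℕ → ℕ → ℕ) : Node → ℕ := fun A =>
  (∑ m' ∈ Finset.Icc 1 (A.2.2 - 1), compSize n p m') +
    (∑ r' ∈ Finset.Icc 1 (A.1 - 1), p A.2.2 r') + A.2.1

/-- The Coxeter generator `s_i = (i, i+1)` of the symmetric group. -/
def sw (i : ℕ) : Equiv.Perm ℕ := Equiv.swap i (i + 1)

/-- The product `s_{i_1} ⋯ s_{i_k}` corresponding to a word `L = [i_1,…,i_k]`. -/
def wordProd (L : List ℕ) : Equiv.Perm ℕ := (L.map sw).prod

/-- `L` is an expression for `w` in the Coxeter generators `s_1,…,s_{n-1}` of `S_n`. -/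
def IsWord (n : ℕ) (L : List ℕ) (w : Equiv.Perm ℕ) : Prop :=
  (∀ i ∈ L, 1 ≤ i ∧ i + 1 ≤ n) ∧ wordProd L = w

/-- The Coxeter length of `w ∈ S_n`. -/
noncomputable def len (n : ℕ) (w : Equiv.Perm ℕ) : ℕ :=
  sInf {k | ∃ L, IsWord n L w ∧ L.length = k}

/-- `L` is a reduced expression for `w ∈ S_n`. -/
def IsReduced (n : ℕ) (L : List ℕ) (w : Equiv.Perm ℕ) : Prop :=
  IsWord n L w ∧ L.length = len n w

/-- The Bruhat order on `S_n`: `x ≤ w` iff some reduced expression for `w` has an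
expression for `x` as a subsequence. -/
def BruhatLE (n : ℕ) (x w : Equiv.Perm ℕ) : Prop :=
  ∃ L, IsReduced n L w ∧ ∃ L', L'.Sublist L ∧ wordProd L' = x

/-- Strict Bruhat order. -/
def BruhatLT (n : ℕ) (x w : Equiv.Perm ℕ) : Prop := BruhatLE n x w ∧ x ≠ w

/-- The left (weak) order on `S_n`: `x ≤_L w` iff `ℓ(w) = ℓ(w x⁻¹) + ℓ(x)`. -/
def LeftLE (n : ℕ) (x w : Equiv.Perm ℕ) : Prop :=
  len n w = len n (w * x⁻¹) + len n x

/-- `w` is a permutation of `{1,…,n}` (fixing everything else). -/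
def PermOf (n : ℕ) (w : Equiv.Perm ℕ) : Prop := ∀ i, i = 0 ∨ n < i → w i = i

/-- `w` is the permutation sending the base tableau `base` to the tableau `t`
(e.g. `w = w_t` when `base = t_λ`). -/
def IsPermOfTab (n : ℕ) (p : ℕ → ℕ → ℕ) (base t : Node → ℕ) (w : Equiv.Perm ℕ) : Prop :=
  PermOf n w ∧ ∀ A, InDiag p A → w (base A) = t A

/-- `Shape(t↓j)`: the multicomposition whose `(m, r)` entry is the number of nodes in
row `r` of component `m` whose entry under `t` is at most `j`. -/
def shape (n : ℕ) (p : ℕ → ℕ → ℕ) (t : Node → ℕ) (j : ℕ) : ℕ → ℕ → ℕ :=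
  fun m r => ((Finset.Icc 1 n).filter fun c => c ≤ p m r ∧ t (r, c, m) ≤ j).card

/-- `Shape(t↓j)'`: the conjugate multicomposition, whose `(m, c)` entry is the number of
nodes in column `c` of component `l + 1 - m` whose entry under `t` is at most `j`. -/
def shapeConj (l n : ℕ) (p : ℕ → ℕ → ℕ) (t : Node → ℕ) (j : ℕ) : ℕ → ℕ → ℕ :=
  fun m c => ((Finset.Icc 1 n).filter fun r => c ≤ p (l + 1 - m) r ∧ t (r, c, l + 1 - m) ≤ j).card

/-- `A` lies weakly to the left of `B`. -/
def WeaklyLeft (A B : Node) : Prop :=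
  B.2.2 < A.2.2 ∨ (A.2.2 = B.2.2 ∧ A.2.1 ≤ B.2.1)

/-- `A` lies weakly above `B`. -/
def WeaklyAbove (A B : Node) : Prop :=
  A.2.2 < B.2.2 ∨ (A.2.2 = B.2.2 ∧ A.1 ≤ B.1)

/-- `A` lies weakly to the right of `B`. -/
def WeaklyRight (A B : Node) : Prop :=
  A.2.2 < B.2.2 ∨ (A.2.2 = B.2.2 ∧ B.2.1 ≤ A.2.1)

/-- `t` (a `mu`-tableau) is `lam`-column-dominated on `1,…,j`: each `i ≤ j` appears in `t`
at least as far to the left as it does in `t_lam`. -/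
def ColDomOn (l n : ℕ) (lam mu : ℕ → ℕ → ℕ) (t : Node → ℕ) (j : ℕ) : Prop :=
  ∀ i A B, 1 ≤ i → i ≤ j → InDiag mu A → t A = i → InDiag lam B →
    colTab l n lam B = i → WeaklyLeft A B

/-- `t` is weakly `lam`-column-dominated on `1,…,j`: each `i ≤ j` appears in `t` in a
component at least as far to the left as it does in `t_lam`. -/
def WColDomOn (l n : ℕ) (lam mu : ℕ → ℕ → ℕ) (t : Node → ℕ) (j : ℕ) : Prop :=
  ∀ i A B, 1 ≤ i → i ≤ j → InDiag mu A → t A = i → InDiag lam B →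
    colTab l n lam B = i → B.2.2 ≤ A.2.2

/-- `t` (a `mu`-tableau) is `lam`-row-dominated on `1,…,j`: each `i ≤ j` appears in `t`
at least as high as it does in `t^lam`. -/
def RowDomOn (n : ℕ) (lam mu : ℕ → ℕ → ℕ) (t : Node → ℕ) (j : ℕ) : Prop :=
  ∀ i A B, 1 ≤ i → i ≤ j → InDiag mu A → t A = i → InDiag lam B →
    rowTab n lam B = i → WeaklyAbove A B

/-- The multipartition `λ_L(c, m)`: the first `c` columns of component `m`, followed by
components `m+1,…,l`. -/
def leftPart (lam : ℕ → ℕ → ℕ) (c m : ℕ) : ℕ → ℕ → ℕ := fun k r =>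
  if k = 0 then 0 else if k = 1 then min (lam m r) c else lam (m + k - 1) r

/-- The multipartition `λ_R(c, m)`: components `1,…,m-1`, followed by the part of
component `m` after its first `c` columns. -/
def rightPart (lam : ℕ → ℕ → ℕ) (c m : ℕ) : ℕ → ℕ → ℕ := fun k r =>
  if k < m then lam k r else if k = m then lam m r - c else 0

/-- The multipartition `λ_T(r₀, m)`: components `1,…,m-1`, followed by the first `r₀`
rows of component `m`. -/
def topPart (lam : ℕ → ℕ → ℕ) (r₀ m : ℕ) : ℕ → ℕ → ℕ := fun k r =>
  if k < m then lam k r else if k = m then (if r ≤ r₀ then lam m r else 0) else 0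

/-- The multipartition `λ_B(r₀, m)`: the rows of component `m` after row `r₀`, followed
by components `m+1,…,l`. -/
def botPart (lam : ℕ → ℕ → ℕ) (r₀ m : ℕ) : ℕ → ℕ → ℕ := fun k r =>
  if k = 0 ∨ r = 0 then 0 else if k = 1 then lam m (r₀ + r) else lam (m + k - 1) r

/-- The glued tableau `t_L # t_R`: places `1,…,n_L` on the left part as in `t_L`, and
places `n_L + t_R(A)` at the node corresponding to each node `A` of the right part. -/
def glueLR (nL c m : ℕ) (tL tR : Node → ℕ) : Node → ℕ := fun A =>
  if A.2.2 < m then nL + tR A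
  else if A.2.2 = m then
    (if A.2.1 ≤ c then tL (A.1, A.2.1, 1) else nL + tR (A.1, A.2.1 - c, m))
  else tL (A.1, A.2.1, A.2.2 - m + 1)

/-- The tableau `t⁺` obtained from a tableau `t` of `μ_R(1,m)` by increasing all entries
by `k`, adjoining a first column with entries `1,…,k` to component `m`, and adjoining
empty components `m+1,…,l`. -/
def addFirstCol (k m : ℕ) (t : Node → ℕ) : Node → ℕ := fun A =>
  if A.2.2 = m then (if A.2.1 = 1 then A.1 else k + t (A.1, A.2.1 - 1, m))
  else k + t A

/-- The tableau `t⁺` obtained from a tableau `t` of `μ_L(d-1,m)` by adjoining empty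
components `1,…,m-1` and adjoining a column `d` to component `m` with entries
`nk+1,…,nk+k` from top to bottom. -/
def addLastCol (nk m d : ℕ) (t : Node → ℕ) : Node → ℕ := fun A =>
  if A.2.2 = m then (if A.2.1 = d then nk + A.1 else t (A.1, A.2.1, 1))
  else t (A.1, A.2.1, A.2.2 - m + 1)

/-- The `i`-th smallest element of a finite set of naturals (1-based). -/
def nthElt (S : Finset ℕ) (i : ℕ) : ℕ := (S.sort (· ≤ ·)).getD (i - 1) 0

/-- The set `S_B` of entries of `t_λ` lying in the bottom region (component `> m`, or
component `m` in a row `> r₀`). -/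
noncomputable def SB (l n : ℕ) (lam : ℕ → ℕ → ℕ) (r₀ m : ℕ) : Finset ℕ :=
  (Finset.Icc 1 n).filter fun i =>
    ∃ A, InDiag lam A ∧ colTab l n lam A = i ∧ (m < A.2.2 ∨ (A.2.2 = m ∧ r₀ < A.1))

/-- The glued tableau `t #̄ s`: on the bottom region the entries are `lab_B ∘ t` and on
the top region they are `lab_T ∘ s`, where `lab_B`, `lab_T` are the order-preserving
bijections onto `S_B`, `S_T`. -/
def glueBT (S_B S_T : Finset ℕ) (r₀ m : ℕ) (tB tT : Node → ℕ) : Node → ℕ := fun A =>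
  if A.2.2 < m then nthElt S_T (tT A)
  else if A.2.2 = m then
    (if A.1 ≤ r₀ then nthElt S_T (tT A) else nthElt S_B (tB (A.1 - r₀, A.2.1, 1)))
  else nthElt S_B (tB (A.1, A.2.1, A.2.2 - m + 1))

/-- The residue of a node `(r, c, m)` with respect to the multicharge `κ`:
`κ_m + c - r` in `ℤ/eℤ` (with `ZMod 0 = ℤ` encoding `e = ∞`). -/
def resNode (e : ℕ) (κ : ℕ → ZMod e) (A : Node) : ZMod e :=
  κ A.2.2 + (A.2.1 : ZMod e) - (A.1 : ZMod e)

/-!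
The nodes of `[λ_L(c,m)]` are exactly the nodes of `[λ]` in column `c` of component `m` or
further to the left, and there are `n_L` of them. All entries `1,…,n_L` of the bijection `t`
lie on these `n_L` nodes, so by counting these nodes carry exactly the entries `1,…,n_L`.
Hence `t` restricted to the left part, and `t - n_L` restricted to the right part, are
tableaux; they are standard because both identifications with parts of `[λ]` only shift
columns and renumber components, so they preserve row and column adjacency.
-/

def InLeft (c m : ℕ) (A : Node) : Prop :=
  m < A.2.2 ∨ (A.2.2 = m ∧ A.2.1 ≤ c)

def shiftEmb (δ κ : ℕ → ℕ) (A : Node) : Node :=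
  (A.1, A.2.1 + δ A.2.2, κ A.2.2)

/-- The identifications of `[λ_L(c,m)]` and `[λ_R(c,m)]` with the two parts of `[λ]`. -/
def leftEmb (m : ℕ) : Node → Node :=
  shiftEmb (fun _ => 0) (fun k => m + k - 1)

def rightEmb (c m : ℕ) : Node → Node :=
  shiftEmb (fun k => if k = m then c else 0) id

theorem shiftEmb_injOn {δ κ : ℕ → ℕ} {K : Set ℕ} (hκ : Set.InjOn κ K) :
    Set.InjOn (shiftEmb δ κ) {A | A.2.2 ∈ K} := by
  rintro ⟨r, c, k⟩ hA ⟨r', c', k'⟩ hA' h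
  simp only [shiftEmb, Prod.mk.injEq] at h
  obtain rfl : k = k' := hκ hA hA' h.2.2
  obtain ⟨rfl, hc, -⟩ := h
  rw [Nat.add_right_cancel hc]

section Transport

variable {p q : ℕ → ℕ → ℕ} {t : Node → ℕ}

theorem IsStd.comp_shiftEmb {δ κ : ℕ → ℕ} (ht : IsStd q t)
    (hpq : ∀ A, InDiag p A → InDiag q (shiftEmb δ κ A)) : IsStd p (t ∘ shiftEmb δ κ) := by
  refine ⟨fun r c k hA hB => ?_,
    fun r c k hA hB => ht.2 r (c + δ k) (κ k) (hpq _ hA) (hpq _ hB)⟩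
  have hB' := hpq _ hB
  simp only [Function.comp, shiftEmb, Nat.add_right_comm c 1] at hB' ⊢
  exact ht.1 r (c + δ k) (κ k) (hpq _ hA) hB'

theorem IsStd.sub_const {a : ℕ} (ht : IsStd p t) (ha : ∀ A, InDiag p A → a ≤ t A) :
    IsStd p (fun A => t A - a) :=
  ⟨fun r c k hA hB => Nat.sub_lt_sub_right (ha _ hA) (ht.1 r c k hA hB),
    fun r c k hA hB => Nat.sub_lt_sub_right (ha _ hA) (ht.2 r c k hA hB)⟩

theorem IsTab.comp_sub {n k a : ℕ} {e : Node → Node} (ht : IsTab n q t) (hk : a + k ≤ n)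
    (hmaps : ∀ A, InDiag p A → InDiag q (e A) ∧ a < t (e A) ∧ t (e A) ≤ a + k)
    (hinj : Set.InjOn e {A | InDiag p A})
    (hsurj : ∀ B, InDiag q B → a < t B → t B ≤ a + k → ∃ A, InDiag p A ∧ e A = B) :
    IsTab k p (fun A => t (e A) - a) := by
  refine ⟨fun A hA => ?_, fun A B hA hB hAB => ?_, fun i hi hik => ?_⟩
  · obtain ⟨-, hlt, hle⟩ := hmaps A hA
    dsimp only
    omega
  · obtain ⟨hqA, hltA, -⟩ := hmaps A hA
    obtain ⟨hqB, hltB, -⟩ := hmaps B hB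
    dsimp only at hAB
    exact hinj hA hB (ht.2.1 _ _ hqA hqB (by omega))
  · obtain ⟨B, hB, htB⟩ := ht.2.2 (a + i) (by omega) (by omega)
    obtain ⟨A, hA, rfl⟩ := hsurj B hB (by omega) (by omega)
    exact ⟨A, hA, by dsimp only; omega⟩

end Transport

section Regions

variable {lam : ℕ → ℕ → ℕ} {c m : ℕ}

theorem inDiag_leftPart_iff {A : Node} :
    InDiag (leftPart lam c m) A ↔
      1 ≤ A.2.2 ∧ InDiag lam (leftEmb m A) ∧ InLeft c m (leftEmb m A) := by
  obtain ⟨r, c', k⟩ := A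
  simp only [InDiag, leftPart, leftEmb, shiftEmb, InLeft, add_zero]
  split_ifs with h0 h1
  · omega
  · subst h1
    simp only [Nat.add_sub_cancel, true_and]
    omega
  · omega

theorem inDiag_rightPart_iff {A : Node} :
    InDiag (rightPart lam c m) A ↔
      InDiag lam (rightEmb c m A) ∧ ¬ InLeft c m (rightEmb c m A) := by
  obtain ⟨r, c', k⟩ := A
  simp only [InDiag, rightPart, rightEmb, shiftEmb, InLeft, id]
  split_ifs <;> (try subst k) <;> omega

theorem exists_leftEmb_eq {B : Node} (hB : InDiag lam B) (hL : InLeft c m B) :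
    ∃ A, InDiag (leftPart lam c m) A ∧ leftEmb m A = B := by
  have hB' : leftEmb m (B.1, B.2.1, B.2.2 + 1 - m) = B := by
    obtain ⟨r, c', k⟩ := B
    simp only [leftEmb, shiftEmb, InLeft, add_zero, Prod.mk.injEq, true_and] at hL ⊢
    omega
  refine ⟨_, inDiag_leftPart_iff.2 ⟨?_, by rwa [hB'], by rwa [hB']⟩, hB'⟩
  show 1 ≤ B.2.2 + 1 - m
  simp only [InLeft] at hL
  omega

theorem exists_rightEmb_eq {B : Node} (hB : InDiag lam B) (hR : ¬ InLeft c m B) :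
    ∃ A, InDiag (rightPart lam c m) A ∧ rightEmb c m A = B := by
  have hB' : rightEmb c m (B.1, B.2.1 - (if B.2.2 = m then c else 0), B.2.2) = B := by
    obtain ⟨r, c', k⟩ := B
    simp only [rightEmb, shiftEmb, InLeft, id, Prod.mk.injEq, true_and, and_true] at hR ⊢
    split_ifs <;> omega
  exact ⟨_, inDiag_rightPart_iff.2 ⟨by rwa [hB'], by rwa [hB']⟩, hB'⟩

theorem leftEmb_injOn : Set.InjOn (leftEmb m) {A | InDiag (leftPart lam c m) A} :=
  (shiftEmb_injOn (K := {k | 1 ≤ k}) fun k hk k' hk' h => by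
    simp only [Set.mem_ofPred_eq] at hk hk' h
    omega).mono fun _ hA => (inDiag_leftPart_iff.1 hA).1

theorem rightEmb_injective : Function.Injective (rightEmb c m) := by
  rw [← Set.injOn_univ]
  exact shiftEmb_injOn (K := Set.univ) Function.injective_id.injOn

theorem glueLR_restrict {nL : ℕ} {t : Node → ℕ} {A : Node}
    (hA : t A ≤ nL ↔ InLeft c m A) :
    glueLR nL c m (t ∘ leftEmb m) (fun B => t (rightEmb c m B) - nL) A = t A := by
  obtain ⟨r, c', k⟩ := A
  simp only [InLeft] at hA
  rcases lt_trichotomy k m with hk | rfl | hk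
  · simp only [glueLR, rightEmb, shiftEmb, if_pos hk, if_neg hk.ne, add_zero, id]
    omega
  · by_cases hc : c' ≤ c
    · simp only [glueLR, leftEmb, shiftEmb, Function.comp, lt_irrefl, hc, if_true, if_false,
        Nat.add_sub_cancel, add_zero]
    · simp only [glueLR, rightEmb, shiftEmb, lt_irrefl, hc, if_true, if_false, id,
        Nat.sub_add_cancel (le_of_not_ge hc)]
      omega
  · simp only [glueLR, leftEmb, shiftEmb, Function.comp, if_neg hk.not_gt, if_neg hk.ne',
      add_zero]
    rw [show m + (k - m + 1) - 1 = k by omega]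

end Regions

section Counting

noncomputable def diagFinset (l n : ℕ) (p : ℕ → ℕ → ℕ) : Finset Node :=
  (Finset.Icc 1 n ×ˢ Finset.Icc 1 n ×ˢ Finset.Icc 1 l).filter (InDiag p)

variable {l n : ℕ}

theorem mem_diagFinset {p : ℕ → ℕ → ℕ} {A : Node} :
    A ∈ diagFinset l n p ↔
      InDiag p A ∧ 1 ≤ A.1 ∧ A.1 ≤ n ∧ A.2.1 ≤ n ∧ 1 ≤ A.2.2 ∧ A.2.2 ≤ l := by
  obtain ⟨r, c, k⟩ := A
  simp only [diagFinset, Finset.mem_filter, Finset.mem_product, Finset.mem_Icc, InDiag]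
  omega

theorem card_diagFinset {p : ℕ → ℕ → ℕ} (hp : ∀ k r, p k r ≤ n) :
    (diagFinset l n p).card = mpSize l n p := by
  calc (diagFinset l n p).card
      = ∑ r ∈ Finset.Icc 1 n, ∑ c ∈ Finset.Icc 1 n, ∑ k ∈ Finset.Icc 1 l,
          if InDiag p (r, c, k) then 1 else 0 := by
        simp only [diagFinset, Finset.card_filter, Finset.sum_product]
    _ = ∑ k ∈ Finset.Icc 1 l, ∑ r ∈ Finset.Icc 1 n, ∑ c ∈ Finset.Icc 1 n,
          if InDiag p (r, c, k) then 1 else 0 :=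
        (Finset.sum_congr rfl fun _ _ => Finset.sum_comm).trans Finset.sum_comm
    _ = mpSize l n p := Finset.sum_congr rfl fun k _ => Finset.sum_congr rfl fun r _ => by
        have hrow : (Finset.Icc 1 n).filter (fun c => InDiag p (r, c, k)) =
            Finset.Icc 1 (p k r) := by
          ext c
          have := hp k r
          rw [Finset.mem_filter, Finset.mem_Icc, Finset.mem_Icc]
          simp only [InDiag]
          omega
        rw [← Finset.card_filter, hrow, Nat.card_Icc, Nat.add_sub_cancel]

theorem apply_le_of_mem_of_surjOn {α : Type*} {D S : Finset α} {f : α → ℕ} {k : ℕ}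
    (hS : S.card ≤ k) (hf : Set.SurjOn f D (Set.Icc 1 k))
    (hDS : ∀ A ∈ D, f A ≤ k → A ∈ S)
    {A : α} (hA : A ∈ S) : f A ≤ k := by
  set F := D.filter (f · ≤ k)
  have hFS : F ⊆ S := fun B hB => hDS B (Finset.mem_filter.1 hB).1 (Finset.mem_filter.1 hB).2
  have hkF : k ≤ F.card := by
    have hsurj : Set.SurjOn f F (Finset.Icc 1 k) := fun i hi => by
      obtain ⟨B, hB, rfl⟩ := hf (by simpa using hi)
      exact ⟨B, Finset.mem_filter.2 ⟨hB, (Set.mem_Icc.1 (by simpa using hi)).2⟩, rfl⟩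
    simpa using Finset.card_le_card_of_surjOn f hsurj
  rw [← Finset.eq_of_subset_of_card_le hFS (hS.trans hkF)] at hA
  exact (Finset.mem_filter.1 hA).2

end Counting

section LeftRegion

variable {l n c m : ℕ} {lam : ℕ → ℕ → ℕ}

theorem IsMP.part_le (h : IsMP l n lam) (k r : ℕ) : lam k r ≤ n := by
  by_cases hkr : k = 0 ∨ l < k ∨ r = 0 ∨ n < r
  · rw [h.1 k r hkr]
    exact Nat.zero_le n
  · calc lam k r ≤ ∑ r' ∈ Finset.Icc 1 n, lam k r' :=
        Finset.single_le_sum (f := lam k) (fun _ _ => Nat.zero_le _)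
          (Finset.mem_Icc.2 (by omega))
    _ ≤ ∑ k' ∈ Finset.Icc 1 l, ∑ r' ∈ Finset.Icc 1 n, lam k' r' :=
        Finset.single_le_sum (f := fun k' => ∑ r' ∈ Finset.Icc 1 n, lam k' r')
          (fun _ _ => Nat.zero_le _) (Finset.mem_Icc.2 (by omega))
    _ = n := h.2.2

theorem IsMP.mem_diagFinset_iff (h : IsMP l n lam) {A : Node} :
    A ∈ diagFinset l n lam ↔ InDiag lam A := by
  refine mem_diagFinset.trans ⟨fun hA => hA.1, fun hA => ⟨hA, ?_⟩⟩
  obtain ⟨r, c', k⟩ := A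
  have hA' : 1 ≤ c' ∧ c' ≤ lam k r := hA
  have hsupp : ¬ (k = 0 ∨ l < k ∨ r = 0 ∨ n < r) := fun hout => by
    have := h.1 k r hout
    omega
  have := h.part_le k r
  dsimp only
  omega

theorem IsMP.mem_diagFinset_leftPart_iff (h : IsMP l n lam) {A : Node} :
    A ∈ diagFinset (l - m + 1) n (leftPart lam c m) ↔ InDiag (leftPart lam c m) A := by
  refine mem_diagFinset.trans ⟨fun hA => hA.1, fun hA => ⟨hA, ?_⟩⟩
  obtain ⟨hk, hA', -⟩ := inDiag_leftPart_iff.1 hA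
  have := mem_diagFinset.1 (h.mem_diagFinset_iff.2 hA')
  obtain ⟨r, c', k⟩ := A
  simp only [leftEmb, shiftEmb] at hk this ⊢
  omega

theorem IsMP.leftPart_le (h : IsMP l n lam) (k r : ℕ) : leftPart lam c m k r ≤ n := by
  unfold leftPart
  split_ifs
  · exact Nat.zero_le n
  · exact (min_le_left _ _).trans (h.part_le m r)
  · exact h.part_le _ r

theorem IsMP.card_filter_inLeft (h : IsMP l n lam) :
    ((diagFinset l n lam).filter (InLeft c m)).card = mpSize (l - m + 1) n (leftPart lam c m) := by
  have himage : (diagFinset l n lam).filter (InLeft c m) =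
      (diagFinset (l - m + 1) n (leftPart lam c m)).image (leftEmb m) := by
    ext B
    simp only [Finset.mem_filter, Finset.mem_image, h.mem_diagFinset_iff,
      h.mem_diagFinset_leftPart_iff]
    constructor
    · rintro ⟨hB, hL⟩
      exact exists_leftEmb_eq hB hL
    · rintro ⟨A, hA, rfl⟩
      exact (inDiag_leftPart_iff.1 hA).2
  rw [himage, Finset.card_image_of_injOn, card_diagFinset h.leftPart_le]
  exact leftEmb_injOn.mono fun A hA => h.mem_diagFinset_leftPart_iff.1 hA

theorem IsMP.mpSize_leftPart_le (h : IsMP l n lam) :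
    mpSize (l - m + 1) n (leftPart lam c m) ≤ n :=
  calc mpSize (l - m + 1) n (leftPart lam c m)
      = ((diagFinset l n lam).filter (InLeft c m)).card := h.card_filter_inLeft.symm
    _ ≤ (diagFinset l n lam).card := Finset.card_filter_le _ _
    _ = n := (card_diagFinset h.part_le).trans h.2.2

theorem entry_le_iff_inLeft {nL : ℕ} {t : Node → ℕ} (hlam : IsMP l n lam) (ht : IsTab n lam t)
    (hnL : nL = mpSize (l - m + 1) n (leftPart lam c m))
    (hleft : ∀ A, InDiag lam A → t A ≤ nL → InLeft c m A) {A : Node} (hA : InDiag lam A) :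
    t A ≤ nL ↔ InLeft c m A := by
  refine ⟨hleft A hA, fun hL => apply_le_of_mem_of_surjOn (D := diagFinset l n lam)
    (hnL ▸ hlam.card_filter_inLeft).le (fun i hi => ?_) (fun B hB hBle => ?_)
    (Finset.mem_filter.2 ⟨hlam.mem_diagFinset_iff.2 hA, hL⟩)⟩
  · obtain ⟨B, hB, rfl⟩ := ht.2.2 i hi.1 (hi.2.trans (hnL ▸ hlam.mpSize_leftPart_le))
    exact ⟨B, hlam.mem_diagFinset_iff.2 hB, rfl⟩
  · exact Finset.mem_filter.2 ⟨hB, hleft B (hlam.mem_diagFinset_iff.1 hB) hBle⟩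

end LeftRegion

section Restriction

variable {n c m nL : ℕ} {lam : ℕ → ℕ → ℕ} {t : Node → ℕ}

theorem IsTab.comp_leftEmb (ht : IsTab n lam t) (hnLn : nL ≤ n)
    (hkey : ∀ A, InDiag lam A → (t A ≤ nL ↔ InLeft c m A)) :
    IsTab nL (leftPart lam c m) (t ∘ leftEmb m) := by
  refine ht.comp_sub (a := 0) (by simpa using hnLn) (fun A hA => ?_) leftEmb_injOn
    fun B hB _ hle => exists_leftEmb_eq hB ((hkey B hB).1 (by simpa using hle))
  obtain ⟨-, hA', hL⟩ := inDiag_leftPart_iff.1 hA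
  exact ⟨hA', (ht.1 _ hA').1, by simpa using (hkey _ hA').2 hL⟩

theorem IsTab.rightEmb_sub (ht : IsTab n lam t) (hnLn : nL ≤ n)
    (hkey : ∀ A, InDiag lam A → (t A ≤ nL ↔ InLeft c m A)) :
    IsTab (n - nL) (rightPart lam c m) (fun A => t (rightEmb c m A) - nL) := by
  refine ht.comp_sub (by omega) (fun A hA => ?_) rightEmb_injective.injOn
    fun B hB hlt _ => exists_rightEmb_eq hB fun hL => ((hkey B hB).2 hL).not_gt hlt
  obtain ⟨hA', hR⟩ := inDiag_rightPart_iff.1 hA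
  have := (ht.1 _ hA').2
  exact ⟨hA', lt_of_not_ge (mt (hkey _ hA').1 hR), by omega⟩

theorem IsStd.rightEmb_sub (ht : IsStd lam t)
    (hkey : ∀ A, InDiag lam A → (t A ≤ nL ↔ InLeft c m A)) :
    IsStd (rightPart lam c m) (fun A => t (rightEmb c m A) - nL) := by
  refine (ht.comp_shiftEmb fun A hA => (inDiag_rightPart_iff.1 hA).1).sub_const fun A hA => ?_
  obtain ⟨hA', hR⟩ := inDiag_rightPart_iff.1 hA
  exact (lt_of_not_ge (mt (hkey _ hA').1 hR)).le

end Restriction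

theorem std_splits_as_glue_general (l n : ℕ) (c m : ℕ)
    (lam : ℕ → ℕ → ℕ) (hlam : IsMP l n lam)
    (nL : ℕ) (hnL : nL = mpSize (l - m + 1) n (leftPart lam c m))
    (t : Node → ℕ) (htTab : IsTab n lam t) (htStd : IsStd lam t)
    (hleft : ∀ A, InDiag lam A → t A ≤ nL → (m < A.2.2 ∨ (A.2.2 = m ∧ A.2.1 ≤ c))) :
    ∃ tL tR : Node → ℕ,
      IsTab nL (leftPart lam c m) tL ∧ IsStd (leftPart lam c m) tL ∧
      IsTab (n - nL) (rightPart lam c m) tR ∧ IsStd (rightPart lam c m) tR ∧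
      ∀ A, InDiag lam A → t A = glueLR nL c m tL tR A := by
  have hnLn : nL ≤ n := hnL ▸ hlam.mpSize_leftPart_le
  have hkey : ∀ A, InDiag lam A → (t A ≤ nL ↔ InLeft c m A) :=
    fun A hA => entry_le_iff_inLeft hlam htTab hnL hleft hA
  exact ⟨t ∘ leftEmb m, fun A => t (rightEmb c m A) - nL,
    htTab.comp_leftEmb hnLn hkey,
    htStd.comp_shiftEmb fun A hA => (inDiag_leftPart_iff.1 hA).2.1,
    htTab.rightEmb_sub hnLn hkey, htStd.rightEmb_sub hkey,
    fun A hA => (glueLR_restrict (hkey A hA)).symm⟩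

/-- If `t ∈ Std(λ)` and the entries `1,…,n_L` all appear in `t` in
column `c` of component `m` or further to the left, then `t = t_L # t_R` for some
`t_L ∈ Std(λ_L(c,m))` and `t_R ∈ Std(λ_R(c,m))`. -/
theorem std_splits_as_glue (l n : ℕ) (hl : 1 ≤ l) (hn : 1 ≤ n)
    (c m : ℕ) (hm1 : 1 ≤ m) (hm2 : m ≤ l)
    (lam : ℕ → ℕ → ℕ) (hlam : IsMP l n lam)
    (nL : ℕ) (hnL : nL = mpSize (l - m + 1) n (leftPart lam c m))
    (t : Node → ℕ) (htTab : IsTab n lam t) (htStd : IsStd lam t)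
    (hleft : ∀ A, InDiag lam A → t A ≤ nL → (m < A.2.2 ∨ (A.2.2 = m ∧ A.2.1 ≤ c))) :
    ∃ tL tR : Node → ℕ,
      IsTab nL (leftPart lam c m) tL ∧ IsStd (leftPart lam c m) tL ∧
      IsTab (n - nL) (rightPart lam c m) tR ∧ IsStd (rightPart lam c m) tR ∧
      ∀ A, InDiag lam A → t A = glueLR nL c m tL tR A :=
  std_splits_as_glue_general l n c m lam hlam nL hnL t htTab htStd hleft

end FS
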